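/- Fix r ≥ 1 and define the split graph G_Bʳ with vertex set (V(B) × {1,…,r}) ⊎ E(B), where E(B) forms a clique, V(B) × {1,…,r} is an independent set, and (v,s) is adjacent to e ∈ E(B) if and only if v is an endpoint of e in B. Then the number of dominating sets of G_Bʳ equals Σ_{S ⊆ E(B)} (2^r)^{c(S)}. (Equation (2) of the paper, instantiated for the reduction graphs Gʳ.) -/
import Mathlib

/-- `D` is a dominating set of `G`: every vertex not in `D` is adjacent to a vertex of `D`. -/
def Dominating {α : Type*} (G : SimpleGraph α) (D : Finset α) : Prop :=
  ∀ v, v ∉ D → ∃ d ∈ D, G.Adj d v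

/-- The split graph `G_Bʳ` on vertex set `(V(B) × {1,…,r}) ⊎ E(B)`: the edges of `B` form a
clique, `V(B) × {1,…,r}` is an independent set, and `(v,s)` is adjacent to an edge `e` iff `v`
is an endpoint of `e` in `B`. -/
def GBr {W : Type*} (B : SimpleGraph W) (r : ℕ) :
    SimpleGraph ((W × Fin r) ⊕ B.edgeSet) :=
  SimpleGraph.fromRel (fun x y =>
    match x, y with
    | Sum.inl (v, _), Sum.inr e => v ∈ (e : Sym2 W)
    | Sum.inr _, Sum.inr _ => True
    | _, _ => False)

lemma GBr_adj_inl_inr {W : Type*} (B : SimpleGraph W) (r : ℕ) (v : W) (s : Fin r)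
    (e : B.edgeSet) : (GBr B r).Adj (Sum.inl (v, s)) (Sum.inr e) ↔ v ∈ (e : Sym2 W) := by
  simp [GBr, SimpleGraph.fromRel_adj]

lemma GBr_adj_inr_inr {W : Type*} (B : SimpleGraph W) (r : ℕ)
    (e e' : B.edgeSet) : (GBr B r).Adj (Sum.inr e) (Sum.inr e') ↔ e ≠ e' := by
  simp [GBr, SimpleGraph.fromRel_adj]

lemma GBr_not_adj_inl_inl {W : Type*} (B : SimpleGraph W) (r : ℕ) (a b : W × Fin r) :
    ¬ (GBr B r).Adj (Sum.inl a) (Sum.inl b) := by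
  simp [GBr, SimpleGraph.fromRel_adj]

lemma dominating_disjSum_iff {W : Type*} [Fintype W] [DecidableEq W]
    (B : SimpleGraph W) (r : ℕ) (hr : 1 ≤ r)
    (T : Finset (W × Fin r)) (S : Finset B.edgeSet) :
    Dominating (GBr B r) (T.disjSum S) ↔
      ∀ v : W, (¬ ∃ e ∈ S, v ∈ (e : Sym2 W)) → ∀ s : Fin r, (v, s) ∈ T := by
  constructor
  · intro hD v hv s
    by_contra hT
    obtain ⟨d, hd, hadj⟩ := hD (Sum.inl (v, s)) (by simpa using hT)
    match d with
    | Sum.inl a => exact GBr_not_adj_inl_inl B r a (v, s) hadj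
    | Sum.inr e =>
      rw [Finset.mem_disjSum] at hd
      obtain ⟨e', he', he''⟩ := hd.resolve_left (by simp)
      cases Sum.inr_injective he''
      exact hv ⟨e, he', ((GBr B r).adj_symm hadj |> (GBr_adj_inl_inr B r v s e).mp)⟩
  · intro h x hx
    match x with
    | Sum.inl (v, s) =>
      have hT : (v, s) ∉ T := by simpa using hx
      by_cases hv : ∃ e ∈ S, v ∈ (e : Sym2 W)
      · obtain ⟨e, he, hve⟩ := hv
        exact ⟨Sum.inr e, by simp [he], (GBr B r).adj_symm ((GBr_adj_inl_inr B r v s e).mpr hve)⟩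
      · exact absurd (h v hv s) hT
    | Sum.inr e =>
      have hS : e ∉ S := by simpa using hx
      rcases S.eq_empty_or_nonempty with rfl | ⟨e', he'⟩
      · -- use an endpoint of e
        set w := (e : Sym2 W).out.1 with hw
        have hwe : w ∈ (e : Sym2 W) := Sym2.out_fst_mem _
        have hwT : (w, ⟨0, hr⟩) ∈ T := h w (by simp) ⟨0, hr⟩
        exact ⟨Sum.inl (w, ⟨0, hr⟩), by simp [hwT],
          (GBr_adj_inl_inr B r w ⟨0, hr⟩ e).mpr hwe⟩
      · refine ⟨Sum.inr e', by simp [he'], (GBr_adj_inr_inr B r e' e).mpr ?_⟩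
        rintro rfl; exact hS he'

lemma card_filter_supersets {α : Type*} [Fintype α] [DecidableEq α] (R : Finset α) :
    (Finset.univ.filter (fun T => R ⊆ T)).card = 2 ^ Rᶜ.card := by
  rw [← Finset.card_powerset]
  apply Finset.card_bij' (fun T _ => T \ R) (fun U _ => U ∪ R)
  · intro T hT
    simp only [Finset.mem_powerset]
    intro x hx
    simp only [Finset.mem_sdiff] at hx
    simp [hx.2]
  · intro U hU
    simp
  · intro T hT
    simp only [Finset.mem_filter] at hT
    exact Finset.sdiff_union_of_subset hT.2
  · intro U hU
    simp only [Finset.mem_powerset] at hU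
    rw [Finset.union_sdiff_right]
    apply Finset.sdiff_eq_self_of_disjoint
    exact Finset.disjoint_left.mpr fun x hx => by simpa using hU hx

/-- Equation (2) for the reduction graphs: for `r ≥ 1`,
`#DS(G_Bʳ) = Σ_{S ⊆ E(B)} (2^r)^{c(S)}`, where `c(S)` is the number of vertices of `B`
incident to at least one edge of `S`. -/
theorem count_dominating_GBr {W : Type*} [Fintype W] [DecidableEq W]
    (B : SimpleGraph W) [DecidableRel B.Adj] (hB : B.edgeSet.Nonempty)
    (r : ℕ) (hr : 1 ≤ r) :
    {D : Finset ((W × Fin r) ⊕ B.edgeSet) | Dominating (GBr B r) D}.ncard =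
      ∑ S ∈ (Finset.univ : Finset (Finset B.edgeSet)),
        (2 ^ r) ^ ({v : W | ∃ e ∈ S, v ∈ (e : Sym2 W)}).ncard := by
  classical
  have hset : {D : Finset ((W × Fin r) ⊕ B.edgeSet) | Dominating (GBr B r) D} =
      ↑(Finset.univ.filter (fun D => Dominating (GBr B r) D)) := by
    ext D; simp
  rw [hset, Set.ncard_coe_finset]
  rw [Finset.card_eq_sum_card_fiberwise
    (f := Finset.toRight) (t := Finset.univ) (fun x _ => Finset.mem_univ _)]
  apply Finset.sum_congr rfl
  intro S _
  -- covered vertices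
  set cov : Finset W := Finset.univ.filter (fun v => ∃ e ∈ S, v ∈ (e : Sym2 W)) with hcov
  have hncard : ({v : W | ∃ e ∈ S, v ∈ (e : Sym2 W)}).ncard = cov.card := by
    rw [hcov]
    rw [show {v : W | ∃ e ∈ S, v ∈ (e : Sym2 W)} =
      ↑(Finset.univ.filter (fun v => ∃ e ∈ S, v ∈ (e : Sym2 W))) by ext v; simp]
    exact Set.ncard_coe_finset _
  rw [hncard]
  -- the required finset R
  set R : Finset (W × Fin r) := covᶜ ×ˢ Finset.univ with hR
  have hfiber : ((Finset.univ.filter (fun D => Dominating (GBr B r) D)).filter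
      (fun D => D.toRight = S)) =
      (Finset.univ.filter (fun T => R ⊆ T)).image (fun T => T.disjSum S) := by
    ext D
    simp only [Finset.mem_filter, Finset.mem_univ, true_and, Finset.mem_image]
    constructor
    · rintro ⟨hdom, hright⟩
      refine ⟨D.toLeft, ⟨?_, ?_⟩⟩
      · intro x hx
        obtain ⟨v, s⟩ := x
        rw [hR] at hx
        simp only [Finset.mem_product, Finset.mem_compl, hcov, Finset.mem_filter,
          Finset.mem_univ, true_and] at hx
        have := (dominating_disjSum_iff B r hr D.toLeft S).mp
          (by rw [← hright, Finset.toLeft_disjSum_toRight]; exact hdom)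
        simpa using this v hx.1 s
      · rw [← hright]; exact Finset.toLeft_disjSum_toRight
    · rintro ⟨T, hT, rfl⟩
      refine ⟨(dominating_disjSum_iff B r hr T S).mpr ?_, by simp⟩
      intro v hv s
      apply hT
      rw [hR]
      simp only [Finset.mem_product, Finset.mem_compl, hcov, Finset.mem_filter,
        Finset.mem_univ, true_and]
      exact ⟨hv, trivial⟩
  rw [hfiber, Finset.card_image_of_injective _ (fun T T' h => by
    simpa using congrArg Finset.toLeft h)]
  rw [card_filter_supersets]
  have hRc : Rᶜ = cov ×ˢ (Finset.univ : Finset (Fin r)) := by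
    ext ⟨v, s⟩
    simp [hR]
  have : Rᶜ.card = cov.card * r := by
    rw [hRc, Finset.card_product]
    simp
  rw [this, mul_comm, pow_mul]
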